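/- arXiv:1604.06695 — 5 statements merged into one kernel-verified Lean document; each statement's English description precedes it below -/
import Mathlib

section
/- Let p be a prime with p > 6 and p ≡ 2 (mod 3). Then there is no finite group G of order 6p that is generated by an element of order 2 together with an element of order 3. -/
/-!
Let `z` have order `p`. Since `p > 6`, Sylow's theorem forces `⟨z⟩` to be normal, and since
`3 ∤ p - 1 = |Aut ⟨z⟩|`, the element `y` of order 3 centralizes it. So the normalizer of `⟨y⟩`
has order divisible by `3p`, hence index dividing 2, and Sylow's theorem makes `⟨y⟩` normal.
Then `G = ⟨x⟩⟨y⟩` has at most `2 · 3 = 6 < 6p` elements.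
-/

open Subgroup
open scoped Pointwise

variable {G : Type*} [Group G]

/-- The number of Sylow `p`-subgroups is `≡ 1 [MOD p]` and equals the index of the normalizer. -/
theorem IsPGroup.normal_of_index_normalizer_lt {p : ℕ} [Fact p.Prime] [Finite (Sylow p G)]
    {H : Subgroup G} (hH : IsPGroup p H) (hHp : ¬ p ∣ H.index)
    (h : (normalizer (H : Set G)).index < p) : H.Normal := by
  have hcard : Nat.card (Sylow p G) = (normalizer (H : Set G)).index :=
    (hH.toSylow hHp).card_eq_index_normalizer
  have hmod : Nat.card (Sylow p G) % p = 1 % p := card_sylow_modEq_one p G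
  rw [hcard, Nat.mod_eq_of_lt h, Nat.mod_eq_of_lt (Fact.out : p.Prime).one_lt] at hmod
  rw [← normalizer_eq_top_iff, ← index_eq_one]
  exact hmod

theorem Subgroup.index_dvd_of_dvd_card {H : Subgroup G} {n m : ℕ} (hn : n ≠ 0)
    (hG : Nat.card G = n * m) (hH : n ∣ Nat.card H) : H.index ∣ m := by
  obtain ⟨k, hk⟩ := hH
  refine ⟨k, Nat.eq_of_mul_eq_mul_left (Nat.pos_of_ne_zero hn) ?_⟩
  rw [← hG, ← H.card_mul_index, hk]
  ring

/-- Conjugation by `g` is an automorphism of `N` whose order divides both `orderOf g` and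
`|Aut N| = φ |N|`. -/
theorem Subgroup.le_centralizer_zpowers_of_coprime_totient {N : Subgroup G} [N.Normal]
    [IsCyclic N] [Finite N] {g : G} (h : (orderOf g).Coprime (Nat.card N).totient) :
    N ≤ centralizer (zpowers g) := by
  have hconj : (MulAut.conjNormal g : MulAut N) = 1 := by
    rw [← orderOf_eq_one_iff, ← Nat.dvd_one, ← h.gcd_eq_one]
    refine Nat.dvd_gcd (orderOf_map_dvd _ g) ?_
    rw [← IsCyclic.card_mulAut]
    exact _root_.orderOf_dvd_natCard _
  rw [le_centralizer_iff, zpowers_le]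
  intro a ha
  have := congrArg (fun φ : MulAut N => ((φ ⟨a, ha⟩ : N) : G)) hconj
  simp only [MulAut.conjNormal_apply, MulAut.one_apply] at this
  exact (mul_inv_eq_iff_eq_mul.mp this).symm

theorem card_le_orderOf_mul_orderOf_of_closure_eq_top {x y : G} [(zpowers y).Normal]
    (h : closure {x, y} = ⊤) : Nat.card G ≤ orderOf x * orderOf y := by
  have hsup : zpowers x ⊔ zpowers y = ⊤ := by
    rw [← h, Set.insert_eq, Subgroup.closure_union, zpowers_eq_closure, zpowers_eq_closure]
  calc Nat.card G = Nat.card ((zpowers x : Set G) * (zpowers y : Set G)) := by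
        rw [← mul_normal, hsup, coe_top, Nat.card_univ]
    _ ≤ Nat.card (zpowers x : Set G) * Nat.card (zpowers y : Set G) := Set.natCard_mul_le
    _ = orderOf x * orderOf y := by simp only [SetLike.coe_sort_coe, Nat.card_zpowers]

theorem stmt_1 (p : ℕ) (hp : p.Prime) (hp6 : 6 < p) (hp3 : p % 3 = 2) :
    ¬ ∃ (G : Type) (_ : Group G) (_ : Fintype G),
      Fintype.card G = 6 * p ∧
      ∃ x y : G, orderOf x = 2 ∧ orderOf y = 3 ∧
        Subgroup.closure ({x, y} : Set G) = ⊤ := by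
  rintro ⟨G, _, _, hcard, x, y, hx, hy, hclo⟩
  have : Fact p.Prime := ⟨hp⟩
  have : Fact (Nat.Prime 3) := ⟨Nat.prime_three⟩
  have hG : Nat.card G = 6 * p := by rw [Nat.card_eq_fintype_card, hcard]
  obtain ⟨z, hz⟩ := exists_prime_orderOf_dvd_card p (hcard ▸ dvd_mul_left p 6)
  have hzidx : (zpowers z).index ∣ 6 :=
    index_dvd_of_dvd_card hp.ne_zero (hG.trans (mul_comm 6 p)) (by rw [Nat.card_zpowers, hz])
  have : (zpowers z).Normal :=
    IsPGroup.normal_of_index_normalizer_lt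
      (.of_card (n := 1) (by rw [Nat.card_zpowers, hz, pow_one]))
      (fun h ↦ by have := Nat.le_of_dvd (by norm_num) (h.trans hzidx); omega)
      ((Nat.le_of_dvd (by norm_num) ((index_dvd_of_le le_normalizer).trans hzidx)).trans_lt hp6)
  have hzy : zpowers z ≤ centralizer (zpowers y) := le_centralizer_zpowers_of_coprime_totient <| by
    rw [hy, Nat.card_zpowers, hz, Nat.totient_prime hp, Nat.prime_three.coprime_iff_not_dvd]
    omega
  have hyN : 3 * p ∣ Nat.card (normalizer (zpowers y : Set G)) :=
    Nat.Coprime.mul_dvd_of_dvd_of_dvd ((Nat.coprime_primes Nat.prime_three hp).mpr (by omega))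
      (by simpa only [Nat.card_zpowers, hy] using card_dvd_of_le (le_normalizer (H := zpowers y)))
      (by simpa only [Nat.card_zpowers, hz] using
        card_dvd_of_le (hzy.trans (centralizer_le_normalizer _)))
  have hyidx : (zpowers y).index ∣ 2 * p :=
    index_dvd_of_dvd_card (by norm_num) (hG.trans (by ring : 6 * p = 3 * (2 * p)))
      (by rw [Nat.card_zpowers, hy])
  have : (zpowers y).Normal :=
    IsPGroup.normal_of_index_normalizer_lt
      (.of_card (n := 1) (by rw [Nat.card_zpowers, hy, pow_one]))
      (fun h ↦ by have := Nat.prime_three.dvd_mul.mp (h.trans hyidx); omega)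
      ((Nat.le_of_dvd (by norm_num) <| index_dvd_of_dvd_card (by omega)
        (hG.trans (by ring : 6 * p = 3 * p * 2)) hyN).trans_lt (by norm_num))
  have := card_le_orderOf_mul_orderOf_of_closure_eq_top hclo
  rw [hG, hx, hy] at this
  omega
end

section
/- Let p be a prime with p ≡ 11 (mod 12). Then there is no finite group G of order 4p that is generated by an element of order 2 together with an element of order 4. -/
/-!
Let `p > 3` be a prime with `p ≡ 3 (mod 4)` and `G = ⟨x, y⟩` of order `4p` with `x² = 1`, `y⁴ = 1`.
The Sylow `p`-subgroup `N` is normal, and `G ⧸ N` is cyclic of order 4 generated by the image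
of `y`. Its only involution is the image of `y²`, so `x = a y²` with `a ∈ N`, and `a ≠ 1` since
otherwise `G = ⟨y⟩`. From `x² = y⁴ = 1` we get `y² a y⁻² = a⁻¹`; writing `y a y⁻¹ = aᶜ` this
says `c² ≡ -1 (mod p)`, impossible for `p ≡ 3 (mod 4)`.
-/

open Subgroup

theorem Sylow.card_eq_of_card_eq_mul {G : Type*} [Group G] [Finite G] {p m : ℕ} [hp : Fact p.Prime]
    (P : Sylow p G) (hG : Nat.card G = m * p) (hm : ¬ p ∣ m) : Nat.card P = p := by
  have hm0 : m ≠ 0 := by rintro rfl; exact hm (dvd_zero p)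
  rw [P.card_eq_multiplicity, hG, Nat.factorization_mul hm0 hp.out.ne_zero, Finsupp.add_apply,
    Nat.factorization_eq_zero_of_not_dvd hm, hp.out.factorization_self, zero_add, pow_one]

theorem Sylow.normal_of_index_lt {G : Type*} [Group G] [Finite G] {p : ℕ} [hp : Fact p.Prime]
    (P : Sylow p G) (h : (P : Subgroup G).index < p) : (P : Subgroup G).Normal := by
  have hdvd := P.card_dvd_index
  have hle : Nat.card (Sylow p G) < p :=
    (Nat.le_of_dvd (Nat.pos_of_ne_zero index_ne_zero_of_finite) hdvd).trans_lt h
  have hone : Nat.card (Sylow p G) = 1 := by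
    have := card_sylow_modEq_one p G
    rwa [Nat.ModEq, Nat.mod_eq_of_lt hle, Nat.mod_eq_of_lt hp.out.one_lt] at this
  have := (Nat.card_eq_one_iff_unique.mp hone).1
  exact P.normal_of_subsingleton

theorem exists_normal_card_eq_prime_of_card_eq_mul {G : Type*} [Group G] [Finite G] {p m : ℕ}
    (hp : p.Prime) (hG : Nat.card G = m * p) (hm : m < p) :
    ∃ N : Subgroup G, N.Normal ∧ Nat.card N = p ∧ N.index = m := by
  have := Fact.mk hp
  have hm0 : m ≠ 0 := by rintro rfl; exact Nat.card_pos.ne' (by simpa using hG)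
  obtain ⟨P⟩ : Nonempty (Sylow p G) := inferInstance
  have hP : Nat.card P = p :=
    P.card_eq_of_card_eq_mul hG fun h => (Nat.le_of_dvd (Nat.pos_of_ne_zero hm0) h).not_gt hm
  have hindex : (P : Subgroup G).index = m := by
    have := (P : Subgroup G).card_mul_index
    rw [hP, hG, mul_comm] at this
    exact Nat.eq_of_mul_eq_mul_right hp.pos this
  exact ⟨P, P.normal_of_index_lt (hindex ▸ hm), hP, hindex⟩

theorem QuotientGroup.orderOf_mk_eq_of_coprime {G : Type*} [Group G] {N : Subgroup G} [N.Normal]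
    {g : G} (h : (Nat.card N).Coprime (orderOf g)) : orderOf (g : G ⧸ N) = orderOf g := by
  refine Nat.dvd_antisymm (orderOf_map_dvd (QuotientGroup.mk' N) g) (orderOf_dvd_of_pow_eq_one ?_)
  set k := orderOf (g : G ⧸ N)
  have hk : g ^ k ∈ N := by
    rw [← QuotientGroup.eq_one_iff, QuotientGroup.mk_pow, pow_orderOf_eq_one]
  have : orderOf (g ^ k) = 1 :=
    Nat.Coprime.eq_one_of_dvd (h.coprime_dvd_left (N.orderOf_dvd_natCard hk)) (orderOf_pow_dvd k)
  exact orderOf_eq_one_iff.mp this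

theorem IsCyclic.eq_of_orderOf_eq_two {α : Type*} [Group α] [IsCyclic α] [Finite α] {a b : α}
    (ha : orderOf a = 2) (hb : orderOf b = 2) : a = b := by
  classical
  have := Fintype.ofFinite α
  have hcard := IsCyclic.card_orderOf_eq_totient (α := α) (d := 2)
    (Nat.card_eq_fintype_card (α := α) ▸ ha ▸ orderOf_dvd_natCard a)
  rw [Nat.totient_two] at hcard
  exact Finset.card_le_one.mp hcard.le a (by simpa using ha) b (by simpa using hb)

theorem div_sq_mem_of_index_eq_four {G : Type*} [Group G] {N : Subgroup G} [N.Normal]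
    (hN : N.index = 4) (hcop : (Nat.card N).Coprime 4) {x y : G} (hx : orderOf x = 2)
    (hy : orderOf y = 4) : x / y ^ 2 ∈ N := by
  have : Finite (G ⧸ N) := Nat.finite_of_card_ne_zero (by rw [← index]; omega)
  have hy' : orderOf (y : G ⧸ N) = 4 := by
    rw [QuotientGroup.orderOf_mk_eq_of_coprime (hy ▸ hcop), hy]
  have hx' : orderOf (x : G ⧸ N) = 2 := by
    rw [QuotientGroup.orderOf_mk_eq_of_coprime (hx ▸ hcop.coprime_dvd_right (by norm_num)), hx]
  have : IsCyclic (G ⧸ N) := isCyclic_of_orderOf_eq_card _ (hy'.trans hN.symm)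
  have hy2 : orderOf ((y : G ⧸ N) ^ 2) = 2 := by
    rw [orderOf_pow_of_dvd (by norm_num) (by simp [hy']), hy']
  rw [← QuotientGroup.eq_iff_div_mem, QuotientGroup.mk_pow]
  exact IsCyclic.eq_of_orderOf_eq_two hx' hy2

theorem Subgroup.zpowers_eq_of_card_prime {G : Type*} [Group G] {N : Subgroup G}
    (hN : (Nat.card N).Prime) {a : G} (ha : a ∈ N) (ha1 : a ≠ 1) : zpowers a = N := by
  have : Finite N := Nat.finite_of_card_ne_zero hN.ne_zero
  refine eq_of_le_of_card_ge (zpowers_le.mpr ha) ?_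
  rw [Nat.card_zpowers]
  rcases hN.eq_one_or_self_of_dvd _ (N.orderOf_dvd_natCard ha) with h | h
  · exact absurd (orderOf_eq_one_iff.mp h) ha1
  · exact h.ge

theorem Subgroup.closure_pow_insert_self {G : Type*} [Group G] (g : G) (n : ℕ) :
    closure {g ^ n, g} = zpowers g :=
  le_antisymm ((closure_le _).mpr (Set.insert_subset (pow_mem (mem_zpowers g) n)
    (Set.singleton_subset_iff.mpr (mem_zpowers g)))) (zpowers_le.mpr (subset_closure (by simp)))

theorem isSquare_neg_one_of_conj_sq_eq_inv {G : Type*} [Group G] {a g : G}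
    (hconj : g * a * g⁻¹ ∈ zpowers a) (hsq : g ^ 2 * a * (g ^ 2)⁻¹ = a⁻¹) :
    IsSquare (-1 : ZMod (orderOf a)) := by
  obtain ⟨c, hc⟩ := mem_zpowers_iff.mp hconj
  have hcc : a ^ (c * c) = a⁻¹ := by
    calc a ^ (c * c) = g * (g * a * g⁻¹) * g⁻¹ := by rw [zpow_mul, hc, conj_zpow, hc]
      _ = g ^ 2 * a * (g ^ 2)⁻¹ := by rw [pow_two]; group
      _ = a⁻¹ := hsq
  have : a ^ (c * c + 1) = 1 := by rw [zpow_add_one, hcc, inv_mul_cancel]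
  have := (ZMod.intCast_zmod_eq_zero_iff_dvd _ _).mpr (orderOf_dvd_iff_zpow_eq_one.mpr this)
  exact ⟨c, by push_cast at this; linear_combination -this⟩

theorem stmt_2 (p : ℕ) (hp : p.Prime) (hp12 : p % 12 = 11) :
    ¬ ∃ (G : Type) (_ : Group G) (_ : Fintype G),
      Fintype.card G = 4 * p ∧
      ∃ x y : G, orderOf x = 2 ∧ orderOf y = 4 ∧
        Subgroup.closure ({x, y} : Set G) = ⊤ := by
  rintro ⟨G, _, _, hcard, x, y, hx, hy, hgen⟩
  obtain ⟨N, hN, hNcard, hNindex⟩ :=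
    exists_normal_card_eq_prime_of_card_eq_mul hp (Nat.card_eq_fintype_card.trans hcard) (by omega)
  have hcop : (Nat.card N).Coprime 4 :=
    hNcard ▸ ((Nat.coprime_primes hp Nat.prime_two).mpr (by omega)).pow_right 2
  obtain ⟨a, haN, rfl⟩ : ∃ a ∈ N, x = a * y ^ 2 :=
    ⟨x / y ^ 2, div_sq_mem_of_index_eq_four hNindex hcop hx hy, (div_mul_cancel x _).symm⟩
  have ha1 : a ≠ 1 := by
    rintro rfl
    rw [one_mul, closure_pow_insert_self] at hgen
    have := Nat.card_zpowers y
    rw [hgen, card_top, hy, Nat.card_eq_fintype_card, hcard] at this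
    omega
  have hzpowers : zpowers a = N := zpowers_eq_of_card_prime (by rwa [hNcard]) haN ha1
  have hsq : y ^ 2 * a * (y ^ 2)⁻¹ = a⁻¹ := by
    have hx2 : (a * y ^ 2) ^ 2 = 1 := orderOf_dvd_iff_pow_eq_one.mp hx.dvd
    have hy4 : y ^ 4 = 1 := orderOf_dvd_iff_pow_eq_one.mp hy.dvd
    calc y ^ 2 * a * (y ^ 2)⁻¹ = a⁻¹ * (a * y ^ 2) ^ 2 * (y ^ 4)⁻¹ := by
          rw [pow_two (a * y ^ 2)]; group
      _ = a⁻¹ := by rw [hx2, hy4]; group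
  have hsquare := isSquare_neg_one_of_conj_sq_eq_inv (hzpowers ▸ hN.conj_mem a haN y) hsq
  rw [← Nat.card_zpowers, hzpowers, hNcard] at hsquare
  have := Fact.mk hp
  exact ZMod.exists_sq_eq_neg_one_iff.mp hsquare (by omega)
end

section
/- Let p be a prime with p > 12. Then there is no finite group G of order 12p that is generated by an element of order 2 together with an element of order 3. -/
/-!
The Sylow `p`-subgroup `P` is normal, since the number of Sylow `p`-subgroups divides 12 and is
`1` mod `p`, and cyclic, so `G` acts on it through the abelian group `Aut P`.

If `x` centralizes `P`, Burnside's transfer theorem gives a normal `p`-complement `K` of the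
centralizer of `P`; `K` is normal in `G` and contains `x`, so `G ⧸ K`, of order divisible by `p`,
is generated by the image of `y` alone, forcing `p ∣ 3`.

If `x` does not centralize `P`, the cube of the action is a homomorphism on `G ⧸ P`, a group of
order 12, which kills the image of `y` but not that of `x`. But in a group of order 12 generated
by `a` and `b` with `a ^ 2 = b ^ 3 = 1`, a normal subgroup of index 2 has a subgroup of order 3
that is normal in the whole group and contains `b`, and the quotient by it, of order 4, would be
generated by the image of `a`.
-/

open Subgroup

variable {G : Type*} [Group G]

theorem MonoidHom.map_eq_one_of_pow_eq_one_of_coprime {H : Type*} [Group H] (f : G →* H)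
    {g : G} {m : ℕ} (hg : g ^ m = 1) (hm : m.Coprime (Nat.card H)) : f g = 1 :=
  orderOf_eq_one_iff.mp <| Nat.eq_one_of_dvd_coprimes hm
    (orderOf_dvd_of_pow_eq_one (by rw [← map_pow, hg, map_one])) (orderOf_dvd_natCard _)

theorem MulAut.conjNormal_eq_one_iff {H : Subgroup G} [H.Normal] {g : G} :
    MulAut.conjNormal g = (1 : MulAut H) ↔ g ∈ centralizer (H : Set G) := by
  simp only [MulEquiv.ext_iff, Subtype.ext_iff, MulAut.conjNormal_apply, MulAut.one_apply,
    mem_centralizer_iff, Subtype.forall, SetLike.mem_coe]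
  exact forall₂_congr fun h _ => by rw [mul_inv_eq_iff_eq_mul, eq_comm]

namespace Subgroup

theorem mem_of_pow_eq_one_of_coprime_index (N : Subgroup G) [N.Normal] {g : G} {m : ℕ}
    (hg : g ^ m = 1) (hm : m.Coprime N.index) : g ∈ N :=
  (QuotientGroup.eq_one_iff g).mp <|
    (QuotientGroup.mk' N).map_eq_one_of_pow_eq_one_of_coprime hg hm

theorem normal_map_subtype_of_coprime {N : Subgroup G} [hN : N.Normal] (K : Subgroup N) [K.Normal]
    (hK : (Nat.card K).Coprime K.index) : (K.map N.subtype).Normal where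
  conj_mem := by
    rintro _ ⟨k, hk, rfl⟩ g
    have hpow : (⟨g * k * g⁻¹, hN.conj_mem k k.2 g⟩ : N) ^ Nat.card K = 1 := by
      have hk1 : k ^ Nat.card K = 1 :=
        congrArg Subtype.val (pow_card_eq_one' (x := (⟨k, hk⟩ : K)))
      ext
      simp [conj_pow, ← coe_pow, hk1]
    exact ⟨_, K.mem_of_pow_eq_one_of_coprime_index hpow hK, rfl⟩

theorem closure_pair_map_eq_top {H : Type*} [Group H] {f : G →* H} (hf : Function.Surjective f)
    {x y : G} (hxy : closure {x, y} = ⊤) : closure {f x, f y} = ⊤ := by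
  rw [← Set.image_pair, ← MonoidHom.map_closure, hxy, map_top_of_surjective f hf]

theorem index_dvd_orderOf_of_closure_pair_eq_top {x y : G} (hxy : closure {x, y} = ⊤)
    (N : Subgroup G) [N.Normal] (hx : x ∈ N) : N.index ∣ orderOf y := by
  have htop : zpowers (y : G ⧸ N) = ⊤ := by
    rw [← closure_pair_map_eq_top (QuotientGroup.mk'_surjective N) hxy, zpowers_eq_closure,
      QuotientGroup.mk'_apply, (QuotientGroup.eq_one_iff x).mpr hx, closure_insert_one]
    rfl
  rw [index_eq_card, ← card_top, ← htop, Nat.card_zpowers]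
  exact orderOf_map_dvd (QuotientGroup.mk' N) y

end Subgroup

namespace Sylow

variable {p : ℕ} [Fact p.Prime] [Finite G]

theorem card_eq_of_card_eq_mul_s5 (P : Sylow p G) {m : ℕ} (hG : Nat.card G = m * p)
    (hm : ¬ p ∣ m) : Nat.card P = p := by
  have hm0 : m ≠ 0 := by rintro rfl; exact hm (dvd_zero p)
  rw [P.card_eq_multiplicity, hG, Nat.factorization_mul hm0 (Fact.out : p.Prime).ne_zero,
    Finsupp.add_apply, Nat.factorization_eq_zero_of_not_dvd hm,
    (Fact.out : p.Prime).factorization_self, zero_add, pow_one]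

theorem normal_of_index_le (P : Sylow p G) (h : (P : Subgroup G).index ≤ p) :
    (P : Subgroup G).Normal := by
  have hp := (Fact.out : p.Prime).one_lt
  have hmod := card_sylow_modEq_one p G
  have hle := Nat.le_of_dvd (Nat.pos_of_ne_zero (P : Subgroup G).index_ne_zero_of_finite)
    P.card_dvd_index
  have hcard : Nat.card (Sylow p G) = 1 := by
    rcases (hle.trans h).lt_or_eq with hlt | heq
    · rwa [Nat.ModEq, Nat.mod_eq_of_lt hlt, Nat.mod_eq_of_lt hp] at hmod
    · rw [Nat.ModEq, heq, Nat.mod_self, Nat.mod_eq_of_lt hp] at hmod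
      exact absurd hmod zero_ne_one
  have : Subsingleton (Sylow p G) := (Nat.card_eq_one_iff_unique.mp hcard).1
  exact P.normal_of_subsingleton

/-- The kernel of Burnside's transfer `C →* P` is a complement of `P` in `C`; it consists of the
elements of `C` of order prime to `p`, which makes it normal in `G`. -/
theorem exists_normal_complement_of_le_centralizer (P : Sylow p G) {C : Subgroup G} [C.Normal]
    (hPC : (P : Subgroup G) ≤ C) (hC : C ≤ centralizer (P : Set G)) :
    ∃ K : Subgroup G, K.Normal ∧ Nat.card K * Nat.card P = Nat.card C ∧
      ∀ g ∈ C, ∀ m : ℕ, g ^ m = 1 → m.Coprime (Nat.card P) → g ∈ K := by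
  set Q := P.subtype hPC
  have hQ : normalizer (Q : Set C) ≤ centralizer (Q : Set C) := by
    intro c _ h hh
    change h ∈ (P.subtype hPC : Subgroup C) at hh
    rw [coe_subtype, mem_subgroupOf] at hh
    exact Subtype.ext (hC c.2 h hh)
  have hcompl := MonoidHom.ker_transferSylow_isComplement' Q hQ
  have hQcard : Nat.card Q = Nat.card P := by
    rw [coe_subtype]; exact Nat.card_congr (subgroupOfEquivOfLe hPC).toEquiv
  refine ⟨(MonoidHom.transferSylow Q hQ).ker.map C.subtype,
    normal_map_subtype_of_coprime _ ?_, ?_, fun g hg m hgm hm => ?_⟩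
  · rw [hcompl.symm.index_eq_card, ← hcompl.index_eq_card]
    exact Q.card_coprime_index.symm
  · rw [card_map_of_injective C.subtype_injective, ← hQcard, hcompl.card_mul_card]
  · refine ⟨⟨g, hg⟩, ?_, rfl⟩
    exact MonoidHom.map_eq_one_of_pow_eq_one_of_coprime _ (Subtype.ext hgm) (hQcard ▸ hm)

theorem card_dvd_orderOf_of_mem_centralizer (P : Sylow p G) [(P : Subgroup G).Normal]
    [IsMulCommutative P] {x y : G} (hxy : closure {x, y} = ⊤) {m : ℕ} (hx : x ^ m = 1)
    (hm : m.Coprime (Nat.card P)) (hxC : x ∈ centralizer (P : Set G)) :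
    Nat.card P ∣ orderOf y := by
  obtain ⟨K, hK, hKcard, hmem⟩ :=
    P.exists_normal_complement_of_le_centralizer (le_centralizer (P : Subgroup G)) le_rfl
  refine dvd_trans ?_ (index_dvd_orderOf_of_closure_pair_eq_top hxy K (hmem x hxC m hx hm))
  refine ⟨(centralizer (P : Set G)).index,
    Nat.eq_of_mul_eq_mul_left (Nat.card_pos (α := K)) ?_⟩
  rw [K.card_mul_index, ← mul_assoc, hKcard]
  exact (card_mul_index _).symm

end Sylow

theorem Subgroup.eq_top_of_mem_of_card_eq_twelve {Q : Type*} [Group Q] (hQ : Nat.card Q = 12)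
    {a b : Q} (hab : closure {a, b} = ⊤) (ha : a ^ 2 = 1) (hb : b ^ 3 = 1)
    (N : Subgroup Q) [N.Normal] (hbN : b ∈ N) : N = ⊤ := by
  have : Finite Q := Nat.finite_of_card_ne_zero (by omega)
  have hba : closure {b, a} = ⊤ := by rwa [Set.pair_comm]
  have hN : N.index ∣ 2 :=
    (index_dvd_orderOf_of_closure_pair_eq_top hba N hbN).trans (orderOf_dvd_of_pow_eq_one ha)
  rcases (Nat.dvd_prime Nat.prime_two).mp hN with h | h
  · exact index_eq_one.mp h
  exfalso
  have hNcard : Nat.card N = 6 := by have := N.card_mul_index; rw [h, hQ] at this; omega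
  have : Fact (Nat.Prime 3) := ⟨Nat.prime_three⟩
  obtain ⟨c, hc⟩ := exists_prime_orderOf_dvd_card' (G := N) 3 (by rw [hNcard]; norm_num)
  set S := zpowers c
  have hS : S.index = 2 := by
    have := S.card_mul_index
    rw [Nat.card_zpowers, hc, hNcard] at this
    omega
  have := normal_of_index_eq_two hS
  have := normal_map_subtype_of_coprime S (by rw [Nat.card_zpowers, hc, hS]; norm_num)
  have hbS : b ∈ S.map N.subtype :=
    ⟨⟨b, hbN⟩, S.mem_of_pow_eq_one_of_coprime_index (m := 3) (Subtype.ext hb)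
      (by rw [hS]; norm_num), rfl⟩
  have hS4 : (S.map N.subtype).index = 4 := by
    have := (S.map N.subtype).card_mul_index
    rw [card_map_of_injective N.subtype_injective, Nat.card_zpowers, hc, hQ] at this
    omega
  have h42 : 4 ∣ 2 := hS4 ▸
    (index_dvd_orderOf_of_closure_pair_eq_top hba _ hbS).trans (orderOf_dvd_of_pow_eq_one ha)
  norm_num at h42

theorem Subgroup.mem_centralizer_of_index_eq_twelve {P : Subgroup G} [P.Normal] [IsCyclic P]
    (hP : P.index = 12) {x y : G} (hxy : closure {x, y} = ⊤) (hx : x ^ 2 = 1) (hy : y ^ 3 = 1) :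
    x ∈ centralizer (P : Set G) := by
  set ψ : G →* (ZMod (Nat.card P))ˣ :=
    (IsCyclic.mulAutMulEquiv P).toMonoidHom.comp MulAut.conjNormal
  have hψ : ∀ g, ψ g = 1 ↔ g ∈ centralizer (P : Set G) := fun g => by
    simp [ψ, MulAut.conjNormal_eq_one_iff]
  -- `ψ` lands in a commutative group, so cubing it gives a homomorphism.
  set θ := (powMonoidHom 3).comp ψ
  have hθP : ∀ g ∈ P, θ g = 1 := fun g hg => by
    simp [θ, (hψ g).mpr (le_centralizer P hg)]
  set φ := QuotientGroup.lift P θ hθP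
  have hφ : φ.ker = ⊤ :=
    eq_top_of_mem_of_card_eq_twelve hP
      (closure_pair_map_eq_top (QuotientGroup.mk'_surjective P) hxy)
      (by rw [← map_pow, hx, map_one]) (by rw [← map_pow, hy, map_one]) φ.ker
      (show ψ y ^ 3 = 1 by rw [← map_pow, hy, map_one])
  have hx3 : x ^ 3 = x := by rw [pow_succ, hx, one_mul]
  have hψx : ψ x ^ 3 = 1 := (hφ ▸ mem_top (x : G ⧸ P) : (x : G ⧸ P) ∈ φ.ker)
  rwa [← map_pow, hx3, hψ] at hψx

theorem stmt_5 (p : ℕ) (hp : p.Prime) (hp12 : 12 < p) :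
    ¬ ∃ (G : Type) (_ : Group G) (_ : Fintype G),
      Fintype.card G = 12 * p ∧
      ∃ x y : G, orderOf x = 2 ∧ orderOf y = 3 ∧
        Subgroup.closure ({x, y} : Set G) = ⊤ := by
  rintro ⟨G, _, _, hcard, x, y, hx, hy, hxy⟩
  have : Fact p.Prime := ⟨hp⟩
  have hG : Nat.card G = 12 * p := by rw [Nat.card_eq_fintype_card, hcard]
  obtain ⟨P⟩ : Nonempty (Sylow p G) := inferInstance
  have hPcard : Nat.card P = p :=
    P.card_eq_of_card_eq_mul_s5 hG fun h => by have := Nat.le_of_dvd (by norm_num) h; omega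
  have hPindex : (P : Subgroup G).index = 12 := by
    have := (P : Subgroup G).card_mul_index
    rw [hPcard, hG] at this
    exact Nat.eq_of_mul_eq_mul_left hp.pos (by rw [this, mul_comm])
  have : (P : Subgroup G).Normal := P.normal_of_index_le (by omega)
  have : IsCyclic P := isCyclic_of_prime_card hPcard
  have hxC := mem_centralizer_of_index_eq_twelve hPindex hxy
    (hx ▸ pow_orderOf_eq_one x) (hy ▸ pow_orderOf_eq_one y)
  have hdvd := P.card_dvd_orderOf_of_mem_centralizer hxy (pow_orderOf_eq_one x)
    (by rw [hx, hPcard]; exact (Nat.coprime_primes Nat.prime_two hp).mpr (by omega)) hxC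
  rw [hPcard, hy] at hdvd
  have := Nat.le_of_dvd (by norm_num) hdvd
  omega
end

section
/- Let p be a prime with p ≡ 1 (mod 6). Then there exist a finite group G of order 6p and a surjective group homomorphism φ from the free product ℤ/2 ∗ ℤ/3 onto G whose kernel is torsion-free. (One may take G to be a semidirect product ℤ/p ⋊ ℤ/6 where a generator t of ℤ/6 acts on ℤ/p by an automorphism of order 6.) -/
/-!
Let `u ∈ (ℤ/p)ˣ` have order 6 and let `G = ℤ/p ⋊ ⟨u⟩`, with `u` acting by multiplication.
The elements `a = (1, u³)` and `b = (0, u²)` have orders 2 and 3, and `a b a b⁻¹ = (1 + u⁵, 1)`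
has order `p`; so the subgroup they generate has order divisible by `6p`, and the homomorphism
`ℤ/2 ∗ ℤ/3 → G` sending the generators to `a` and `b` is onto. It is injective on both factors,
and in a free product every element of finite order is conjugate into a factor, so the kernel is
torsion-free. For the latter, conjugating a reduced word whose first and last letters lie in the
same factor by its last letter shortens it; once the two end letters lie in different factors,
the powers of the word are reduced words of growing length, hence never trivial.
-/

open Monoid

/-- The older Mathlib's `Monoid.IsTorsionFree`, removed since: the only element of finite order is `1`. -/
def Monoid.IsTorsionFree (G : Type*) [Monoid G] : Prop :=
  ∀ g : G, g ≠ 1 → ¬IsOfFinOrder g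

open scoped Monoid.Coprod
open Subgroup Multiplicative

namespace Monoid.CoprodI

variable {ι : Type*} {G : ι → Type*} [∀ i, Group (G i)]

theorem NeWord.prod_ne_one {i j : ι} (w : NeWord G i j) : w.prod ≠ 1 := by
  classical
  intro h
  have : w.toWord = Word.empty := Word.equiv.symm.injective h
  exact w.toList_ne_nil (congrArg Word.toList this)

theorem NeWord.not_isOfFinOrder_prod {i j : ι} (w : NeWord G i j) (hij : i ≠ j) :
    ¬IsOfFinOrder w.prod := by
  have hpow : ∀ n : ℕ, ∃ w' : NeWord G i j, w'.prod = w.prod ^ (n + 1) := by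
    intro n
    induction n with
    | zero => exact ⟨w, (pow_one _).symm⟩
    | succ n ih =>
      obtain ⟨w', hw'⟩ := ih
      exact ⟨.append w hij.symm w', by rw [NeWord.append_prod, hw', pow_succ' _ (n + 1)]⟩
  intro hfin
  obtain ⟨n, hn, hw⟩ := isOfFinOrder_iff_pow_eq_one.mp hfin
  obtain ⟨w', hw'⟩ := hpow (n - 1)
  exact w'.prod_ne_one (by rwa [hw', Nat.sub_add_cancel hn])

namespace Word

theorem exists_toList_eq_of_infix {w : Word G} {l : List (Σ i, G i)} (h : l <:+: w.toList) :
    ∃ u : Word G, u.toList = l :=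
  ⟨⟨l, fun x hx => w.ne_one x (h.subset hx), w.chain_ne.infix h⟩, rfl⟩

theorem not_isOfFinOrder_prod {w : Word G} {i j : ι} {a : G i} {b : G j} {l : List (Σ i, G i)}
    (hw : w.toList = ⟨i, a⟩ :: (l ++ [⟨j, b⟩])) (hij : i ≠ j) : ¬IsOfFinOrder w.prod := by
  obtain ⟨i', j', w', rfl⟩ := NeWord.of_word w (fun h => by simp [h] at hw)
  have hhead := w'.toList_head?
  have hlast := w'.toList_getLast?
  change w'.toList = _ at hw
  rw [hw] at hhead hlast
  rw [← List.cons_append, List.getLast?_concat] at hlast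
  simp only [List.head?_cons, Option.some.injEq, Sigma.mk.injEq] at hhead hlast
  obtain ⟨rfl, -⟩ := hhead
  obtain ⟨rfl, -⟩ := hlast
  exact w'.not_isOfFinOrder_prod hij

variable [∀ i, DecidableEq (G i)]

theorem length_tail_le_length_rcons {i : ι} (p : Pair G i) :
    p.tail.toList.length ≤ (rcons p).toList.length := by
  unfold rcons; split <;> simp

theorem length_rcons_le {i : ι} (p : Pair G i) :
    (rcons p).toList.length ≤ p.tail.toList.length + 1 := by
  unfold rcons; split <;> simp

variable [DecidableEq ι]

theorem length_of_smul_le {i : ι} (m : G i) (w : Word G) :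
    (of m • w).toList.length ≤ w.toList.length + 1 := by
  rw [of_smul_def]
  refine (length_rcons_le _).trans (Nat.add_le_add_right ?_ 1)
  simpa only [← equivPair_symm, Equiv.symm_apply_apply] using
    length_tail_le_length_rcons (equivPair i w)

theorem exists_conj_length_lt {w : Word G} {i : ι} {a b : G i} {l : List (Σ i, G i)}
    (hw : w.toList = ⟨i, a⟩ :: (l ++ [⟨i, b⟩])) :
    ∃ w' : Word G, w'.toList.length < w.toList.length ∧ w'.prod = of b * w.prod * (of b)⁻¹ := by
  obtain ⟨u, hu⟩ := exists_toList_eq_of_infix (w := w) (l := l)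
    (by rw [hw]; exact List.infix_cons (List.prefix_append _ _).isInfix)
  refine ⟨of (b * a) • u, ?_, ?_⟩
  · have := length_of_smul_le (b * a) u
    rw [hu] at this
    rw [hw, List.length_cons, List.length_append, List.length_singleton]
    omega
  · rw [prod_smul]
    simp [Word.prod, hw, hu, mul_assoc]

theorem exists_conj_eq_of_of_isOfFinOrder [Nonempty ι] (w : Word G) (hw : IsOfFinOrder w.prod) :
    ∃ (x : CoprodI G) (i : ι) (m : G i), x * w.prod * x⁻¹ = of m := by
  induction hn : w.toList.length using Nat.strong_induction_on generalizing w with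
  | _ n ih =>
  rcases hl : w.toList with _ | ⟨⟨i, a⟩, l⟩
  · exact ⟨1, Classical.arbitrary ι, 1, by simp [Word.prod, hl]⟩
  rcases l.eq_nil_or_concat' with rfl | ⟨l, ⟨j, b⟩, rfl⟩
  · exact ⟨1, i, a, by simp [Word.prod, hl]⟩
  obtain rfl | hij := eq_or_ne i j
  · obtain ⟨w', hlen, hprod⟩ := exists_conj_length_lt hl
    have hw' : IsOfFinOrder w'.prod := by
      rw [hprod, ← MulAut.conj_apply]
      exact (MulAut.conj (of b)).toMonoidHom.isOfFinOrder hw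
    obtain ⟨x, k, m, hx⟩ := ih _ (hn ▸ hlen) w' hw' rfl
    exact ⟨x * of b, k, m, by rw [← hx, hprod]; group⟩
  · exact absurd hw (not_isOfFinOrder_prod hl hij)

end Word

theorem exists_conj_eq_of_of_isOfFinOrder [Nonempty ι] {g : CoprodI G} (hg : IsOfFinOrder g) :
    ∃ (x : CoprodI G) (i : ι) (m : G i), x * g * x⁻¹ = of m := by
  classical
  have hprod : (Word.equiv g).prod = g := Word.equiv.symm_apply_apply g
  simpa only [hprod] using Word.exists_conj_eq_of_of_isOfFinOrder (Word.equiv g) (by rwa [hprod])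

end Monoid.CoprodI

universe u

namespace Monoid.Coprod

variable {M N : Type u} [Group M] [Group N]

theorem exists_conj_eq_inl_or_inr_of_isOfFinOrder {g : M ∗ N} (hg : IsOfFinOrder g) :
    ∃ x : M ∗ N, (∃ m, x * g * x⁻¹ = inl m) ∨ ∃ n, x * g * x⁻¹ = inr n := by
  let F (b : Bool) : Type u := cond b M N
  let _ : ∀ b, Group (F b) := fun b => by cases b <;> assumption
  let toI : M ∗ N →* CoprodI F :=
    lift (CoprodI.of (M := F) (i := true)) (CoprodI.of (M := F) (i := false))
  let ofI : CoprodI F →* M ∗ N := CoprodI.lift fun | true => inl | false => inr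
  have hofI_toI : ofI.comp toI = .id _ :=
    hom_ext (by ext; simp [toI, ofI]) (by ext; simp [toI, ofI])
  obtain ⟨x, i, m, hx⟩ := CoprodI.exists_conj_eq_of_of_isOfFinOrder (toI.isOfFinOrder hg)
  have := congrArg ofI hx
  simp only [map_mul, map_inv, ← MonoidHom.comp_apply, hofI_toI] at this
  refine ⟨ofI x, ?_⟩
  cases i
  · exact .inr ⟨m, by simpa [ofI] using this⟩
  · exact .inl ⟨m, by simpa [ofI] using this⟩

theorem isTorsionFree_ker {H : Type*} [Group H] (φ : M ∗ N →* H)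
    (hM : Function.Injective (φ.comp inl)) (hN : Function.Injective (φ.comp inr)) :
    IsTorsionFree φ.ker := by
  intro y hy hfin
  obtain ⟨x, ⟨m, hx⟩ | ⟨n, hx⟩⟩ :=
    exists_conj_eq_inl_or_inr_of_isOfFinOrder (φ.ker.subtype.isOfFinOrder hfin)
  · have hm : φ.comp inl m = φ.comp inl 1 := by simp [← hx, φ.mem_ker.mp y.2]
    exact hy (Subtype.ext (by simpa [hM hm] using hx))
  · have hn : φ.comp inr n = φ.comp inr 1 := by simp [← hx, φ.mem_ker.mp y.2]
    exact hy (Subtype.ext (by simpa [hN hn] using hx))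

end Monoid.Coprod

def Units.toMulAutMultiplicative (R : Type*) [Semiring R] : Rˣ →* MulAut (Multiplicative R) where
  toFun u := AddEquiv.toMultiplicative (DistribMulAction.toAddAut Rˣ R u)
  map_one' := by ext; simp
  map_mul' u v := by ext; simp [mul_smul]

@[simp]
theorem Units.toMulAutMultiplicative_apply {R : Type*} [Semiring R] (u : Rˣ) (x : R) :
    Units.toMulAutMultiplicative R u (ofAdd x) = ofAdd (u * x) := rfl

theorem IsCyclic.exists_orderOf_eq_of_dvd {α : Type*} [Group α] [Finite α] [IsCyclic α] {d : ℕ}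
    (hd : d ∣ Nat.card α) : ∃ g : α, orderOf g = d := by
  obtain ⟨g, hg⟩ := IsCyclic.exists_ofOrder_eq_natCard (α := α)
  exact ⟨g ^ (Nat.card α / d), by
    rw [← hg] at hd ⊢; exact orderOf_pow_orderOf_div (hg ▸ Nat.card_pos.ne') hd⟩

theorem Units.pow_eq_neg_one_of_orderOf_eq_two_mul {R : Type*} [Ring R] [NoZeroDivisors R]
    {u : Rˣ} {k : ℕ} (hk : k ≠ 0) (hu : orderOf u = 2 * k) : u ^ k = -1 := by
  have hsq : ((u ^ k : Rˣ) : R) * ((u ^ k : Rˣ) : R) = 1 := by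
    rw [← Units.val_mul, ← pow_add, ← two_mul, ← hu, pow_orderOf_eq_one, Units.val_one]
  refine Units.ext ((mul_self_eq_one_iff.mp hsq).resolve_left fun h => ?_)
  exact pow_ne_one_of_lt_orderOf hk (by omega) (Units.ext h)

instance {N G : Type*} [Group N] [Group G] [Finite N] [Finite G] (φ : G →* MulAut N) :
    Finite (N ⋊[φ] G) :=
  Finite.of_equiv _ SemidirectProduct.equivProd.symm

theorem exists_injective_monoidHom_zmod_of_orderOf_eq {G : Type*} [Group G] {g : G} {n : ℕ}
    (hg : orderOf g = n) :
    ∃ f : Multiplicative (ZMod n) →* G, Function.Injective f ∧ f (ofAdd 1) = g := by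
  let e := zmodMulEquivOfGenerator (g := (⟨g, mem_zpowers g⟩ : zpowers g))
    (fun ⟨_, k, hk⟩ => ⟨k, Subtype.ext hk⟩) ((Nat.card_zpowers g).trans hg)
  exact ⟨(zpowers g).subtype.comp e.toMonoidHom, Subtype.val_injective.comp e.injective,
    by simp [e]⟩

variable {p : ℕ} (u : (ZMod p)ˣ)

/-- The paper's `ℤ/p ⋊ ℤ/6`, when `u` has order 6. -/
abbrev ZModSemidirect : Type :=
  Multiplicative (ZMod p) ⋊[(Units.toMulAutMultiplicative (ZMod p)).comp (zpowers u).subtype]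
    zpowers u

namespace ZModSemidirect

def gen₂ : ZModSemidirect u := ⟨ofAdd 1, ⟨u ^ 3, npow_mem_zpowers u 3⟩⟩

def gen₃ : ZModSemidirect u := SemidirectProduct.inr ⟨u ^ 2, npow_mem_zpowers u 2⟩

variable {u} [Fact p.Prime]

theorem card (hu : orderOf u = 6) : Nat.card (ZModSemidirect u) = 6 * p := by
  rw [SemidirectProduct.card, Nat.card_zpowers, hu, Nat.card_eq_fintype_card]; simp [mul_comm]

theorem orderOf_gen₂ (hu : orderOf u = 6) : orderOf (gen₂ u) = 2 := by
  have h3 : u ^ 3 = -1 := Units.pow_eq_neg_one_of_orderOf_eq_two_mul three_ne_zero hu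
  refine orderOf_eq_prime ?_ ?_
  · ext <;> simp [gen₂, pow_two, h3, -map_pow]
  · intro h
    exact pow_ne_one_of_lt_orderOf three_ne_zero (by omega)
      (congrArg (fun x => (x.right : (ZMod p)ˣ)) h)

theorem orderOf_gen₃ (hu : orderOf u = 6) : orderOf (gen₃ u) = 3 := by
  refine orderOf_eq_prime ?_ ?_
  · rw [gen₃, ← map_pow, ← map_one SemidirectProduct.inr]
    congr 1
    apply Subtype.ext
    change (u ^ 2) ^ 3 = 1
    rw [← pow_mul]
    exact orderOf_dvd_iff_pow_eq_one.mp (by simp [hu])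
  · intro h
    exact pow_ne_one_of_lt_orderOf two_ne_zero (by omega)
      (congrArg (fun x => (x.right : (ZMod p)ˣ)) h)

theorem gen₂_mul_gen₃_mul_gen₂_mul_gen₃_inv (hu : orderOf u = 6) :
    gen₂ u * gen₃ u * gen₂ u * (gen₃ u)⁻¹ =
      SemidirectProduct.inl (ofAdd (1 + (u : ZMod p) ^ 5)) := by
  apply SemidirectProduct.ext
  · simp [gen₂, gen₃, -map_pow, ← pow_add]
  · apply Subtype.ext
    simp only [gen₂, gen₃, SemidirectProduct.mul_right, SemidirectProduct.inv_right,
      SemidirectProduct.right_inr, SemidirectProduct.right_inl, coe_mul, coe_inv, coe_one]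
    rw [← pow_orderOf_eq_one u, hu]
    group

theorem orderOf_gen₂_mul_gen₃_mul_gen₂_mul_gen₃_inv (hu : orderOf u = 6) :
    orderOf (gen₂ u * gen₃ u * gen₂ u * (gen₃ u)⁻¹) = p := by
  have hd : 1 + (u : ZMod p) ^ 5 ≠ 0 := by
    intro h
    have h5 : u ^ 5 = -1 := Units.ext (by simpa using eq_neg_of_add_eq_zero_right h)
    have : orderOf u ∣ 10 :=
      orderOf_dvd_of_pow_eq_one (by rw [show 10 = 5 * 2 by rfl, pow_mul, h5]; simp)
    rw [hu] at this
    omega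
  rw [gen₂_mul_gen₃_mul_gen₂_mul_gen₃_inv hu]
  refine orderOf_eq_prime ?_ ?_
  · rw [← map_pow, ← ofAdd_nsmul, nsmul_eq_mul, ZMod.natCast_self, zero_mul, ofAdd_zero, map_one]
  · rw [Ne, ← map_one SemidirectProduct.inl, SemidirectProduct.inl_inj]
    exact hd

theorem closure_gen₂_gen₃ (hu : orderOf u = 6) (hcop : Nat.Coprime 6 p) :
    closure {gen₂ u, gen₃ u} = ⊤ := by
  set H := closure {gen₂ u, gen₃ u}
  have ha : gen₂ u ∈ H := subset_closure (by simp)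
  have hb : gen₃ u ∈ H := subset_closure (by simp)
  have h6 : 2 * 3 ∣ Nat.card H := Nat.Coprime.mul_dvd_of_dvd_of_dvd (by norm_num)
    (orderOf_gen₂ hu ▸ H.orderOf_dvd_natCard ha) (orderOf_gen₃ hu ▸ H.orderOf_dvd_natCard hb)
  have hpH : p ∣ Nat.card H := by
    have := H.orderOf_dvd_natCard (mul_mem (mul_mem (mul_mem ha hb) ha) (inv_mem hb))
    rwa [orderOf_gen₂_mul_gen₃_mul_gen₂_mul_gen₃_inv hu] at this
  refine H.eq_top_of_le_card (Nat.le_of_dvd Nat.card_pos ?_)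
  rw [card hu]
  exact hcop.mul_dvd_of_dvd_of_dvd h6 hpH

end ZModSemidirect

theorem stmt_7 (p : ℕ) (hp : p.Prime) (hp6 : p % 6 = 1) :
    ∃ (G : Type) (_ : Group G) (_ : Fintype G),
      Fintype.card G = 6 * p ∧
      ∃ φ : Coprod (Multiplicative (ZMod 2)) (Multiplicative (ZMod 3)) →* G,
        Function.Surjective φ ∧ Monoid.IsTorsionFree φ.ker := by
  have : Fact p.Prime := ⟨hp⟩
  have hcop : Nat.Coprime 6 p := by rw [Nat.Coprime, Nat.gcd_rec, hp6]; rfl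
  obtain ⟨u, hu⟩ : ∃ u : (ZMod p)ˣ, orderOf u = 6 :=
    IsCyclic.exists_orderOf_eq_of_dvd (by rw [Nat.card_eq_fintype_card, ZMod.card_units]; omega)
  obtain ⟨f₂, hf₂, hf₂_one⟩ :=
    exists_injective_monoidHom_zmod_of_orderOf_eq (ZModSemidirect.orderOf_gen₂ hu)
  obtain ⟨f₃, hf₃, hf₃_one⟩ :=
    exists_injective_monoidHom_zmod_of_orderOf_eq (ZModSemidirect.orderOf_gen₃ hu)
  refine ⟨ZModSemidirect u, inferInstance, Fintype.ofFinite _, ?_, Coprod.lift f₂ f₃, ?_, ?_⟩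
  · rw [Fintype.card_eq_nat_card, ZModSemidirect.card hu]
  · rw [← MonoidHom.range_eq_top, eq_top_iff, ← ZModSemidirect.closure_gen₂_gen₃ hu hcop,
      closure_le]
    rintro _ (rfl | rfl)
    · exact ⟨Coprod.inl (ofAdd 1), by simp [hf₂_one]⟩
    · exact ⟨Coprod.inr (ofAdd 1), by simp [hf₃_one]⟩
  · exact Coprod.isTorsionFree_ker _ (by simpa using hf₂) (by simpa using hf₃)
end

section
/- Let m > 1 be an integer. Then there exists a surjective group homomorphism from the free product ℤ/2 ∗ D₂ onto the dihedral group D_{2m} of order 4m whose kernel is torsion-free. -/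
/-!
A nontrivial element of finite order in a free product is conjugate into a factor. Write it as a
reduced word. If the first and last letters lie in different factors, the powers of the word are
reduced words of growing length, so it has infinite order. Otherwise conjugating by the last
letter either cancels the two ends, leaving a shorter word, or merges them into a reduced word
whose ends lie in different factors. Hence a homomorphism out of a free product that is injective
on each factor has a torsion-free kernel.

The map `ℤ/2 ∗ D₂ → D_{2m}` sending the generator of `ℤ/2` to the reflection `sr 1` and embedding
`D₂` as `{r 0, r m, sr 0, sr m}` is of this kind, and it is surjective because the reflections
`sr 0` and `sr 1` generate `D_{2m}`.
-/

open Monoid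

open Function

theorem Monoid.IsTorsionFree.ker_comp {G H K : Type*} [Group G] [Group H] [Group K]
    {φ : H →* K} (hφ : IsTorsionFree φ.ker) {ψ : G →* H} (hψ : Injective ψ) :
    IsTorsionFree (φ.comp ψ).ker := by
  rintro ⟨g, hg⟩ h1 hfin
  refine hφ ⟨ψ g, hg⟩ (fun h => h1 (Subtype.ext (hψ (by simpa using congrArg Subtype.val h)))) ?_
  rw [← Submonoid.isOfFinOrder_coe] at hfin ⊢
  exact ψ.isOfFinOrder hfin

namespace Monoid.CoprodI.NeWord

variable {ι : Type*} {G : ι → Type*} [∀ i, Group (G i)]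

theorem prod_ne_one_s14 {i j : ι} (w : NeWord G i j) : w.prod ≠ 1 := by
  classical
  intro h
  have : w.toWord = Word.empty := by
    rw [← Word.equiv.apply_symm_apply w.toWord]
    exact congrArg Word.equiv h
  exact w.toList_ne_nil (congrArg Word.toList this)

theorem exists_prod_eq_prod_pow_succ {i j : ι} (w : NeWord G i j) (hij : j ≠ i) (n : ℕ) :
    ∃ v : NeWord G i j, v.prod = w.prod ^ (n + 1) := by
  induction n with
  | zero => exact ⟨w, (pow_one _).symm⟩
  | succ n ih =>
    obtain ⟨v, hv⟩ := ih
    exact ⟨append w hij v, by rw [append_prod, hv, pow_succ' _ (n + 1)]⟩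

theorem not_isOfFinOrder_prod_s14 {i j : ι} (w : NeWord G i j) (hij : j ≠ i) :
    ¬IsOfFinOrder w.prod := by
  rw [isOfFinOrder_iff_pow_eq_one]
  rintro ⟨_ | n, hn, hpow⟩
  · exact hn.false
  · obtain ⟨v, hv⟩ := w.exists_prod_eq_prod_pow_succ hij n
    exact v.prod_ne_one_s14 (hv.trans hpow)

theorem eq_and_prod_eq_or_exists_tail {i j : ι} (w : NeWord G i j) :
    (i = j ∧ w.prod = of w.head) ∨ ∃ k, k ≠ i ∧ ∃ v : NeWord G k j,
      v.toList.length < w.toList.length ∧ w.prod = of w.head * v.prod := by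
  induction w with
  | singleton x hx => exact .inl ⟨rfl, prod_singleton x hx⟩
  | @append i j k l w₁ hjk w₂ ih₁ _ =>
    right
    rcases ih₁ with ⟨rfl, h₁⟩ | ⟨k', hk', v, hlen, h₁⟩
    · exact ⟨k, hjk.symm, w₂, by simpa using List.length_pos_iff.mpr w₁.toList_ne_nil,
        by simp [append_prod, h₁]⟩
    · exact ⟨k', hk', append v hjk w₂, by simpa using hlen, by simp [append_prod, h₁, mul_assoc]⟩

theorem eq_and_prod_eq_or_exists_init {i j : ι} (w : NeWord G i j) :
    (i = j ∧ w.prod = of w.last) ∨ ∃ k, k ≠ j ∧ ∃ v : NeWord G i k,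
      v.toList.length < w.toList.length ∧ w.prod = v.prod * of w.last := by
  induction w with
  | singleton x hx => exact .inl ⟨rfl, prod_singleton x hx⟩
  | @append i j k l w₁ hjk w₂ _ ih₂ =>
    right
    rcases ih₂ with ⟨rfl, h₂⟩ | ⟨k', hk', v, hlen, h₂⟩
    · exact ⟨j, hjk, w₁, by simpa using List.length_pos_iff.mpr w₂.toList_ne_nil,
        by simp [append_prod, h₂]⟩
    · exact ⟨k', hk', append w₁ hjk v, by simpa using hlen, by simp [append_prod, h₂, mul_assoc]⟩

theorem exists_isConj_of_isOfFinOrder_prod {i j : ι} (w : NeWord G i j)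
    (hw : IsOfFinOrder w.prod) : ∃ k, ∃ x : G k, IsConj (of x) w.prod := by
  induction hn : w.toList.length using Nat.strong_induction_on generalizing i j with
  | _ n ih =>
  obtain rfl : i = j := of_not_not fun hij => w.not_isOfFinOrder_prod_s14 (Ne.symm hij) hw
  rcases w.eq_and_prod_eq_or_exists_tail with ⟨-, hw₁⟩ | ⟨k, hki, v, hv, hw₁⟩
  · exact ⟨i, w.head, hw₁ ▸ IsConj.refl _⟩
  rcases v.eq_and_prod_eq_or_exists_init with ⟨rfl, -⟩ | ⟨l, hli, u, hu, hv₁⟩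
  · exact absurd rfl hki
  have hconj : IsConj w.prod (of (v.last * w.head) * u.prod) :=
    isConj_iff.mpr ⟨of v.last, by rw [hw₁, hv₁, map_mul]; group⟩
  have hu_fin : IsOfFinOrder (of (v.last * w.head) * u.prod) := hconj.isOfFinOrder hw
  by_cases hba : v.last * w.head = 1
  · rw [hba, map_one, one_mul] at hconj hu_fin
    obtain ⟨k', x, hx⟩ := ih _ (hn ▸ hu.trans hv) u hu_fin rfl
    exact ⟨k', x, hx.trans hconj.symm⟩
  · -- the conjugate is cyclically reduced
    rw [← prod_singleton _ hba, ← append_prod (hne := hki.symm)] at hu_fin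
    exact absurd hu_fin (not_isOfFinOrder_prod_s14 _ hli)

end Monoid.CoprodI.NeWord

namespace Monoid.CoprodI

variable {ι : Type*} {G : ι → Type*} [∀ i, Group (G i)]

theorem exists_isConj_of_isOfFinOrder {g : CoprodI G} (hg : IsOfFinOrder g) (h1 : g ≠ 1) :
    ∃ i, ∃ x : G i, IsConj (of x) g := by
  classical
  obtain ⟨i, j, w, hw⟩ := NeWord.of_word (Word.equiv g) fun h => h1 <| by
    rw [← Word.equiv.symm_apply_apply g, h]
    exact Word.prod_empty
  have hwg : w.prod = g := by
    rw [NeWord.prod, hw]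
    exact Word.equiv.symm_apply_apply g
  subst hwg
  exact w.exists_isConj_of_isOfFinOrder_prod hg

theorem isTorsionFree_ker_lift {H : Type*} [Group H] {f : ∀ i, G i →* H}
    (hf : ∀ i, Injective (f i)) : IsTorsionFree (lift f).ker := by
  rintro ⟨g, hg⟩ h1 hfin
  rw [← Submonoid.isOfFinOrder_coe] at hfin
  obtain ⟨i, x, hx⟩ := exists_isConj_of_isOfFinOrder hfin fun h => h1 (Subtype.ext h)
  have hfx := (lift f).map_isConj hx
  rw [lift_of, MonoidHom.mem_ker.mp hg, isConj_one_left] at hfx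
  rw [(hf i).eq_iff' (map_one _)] at hfx
  rw [hfx, map_one, isConj_one_right] at hx
  exact h1 (Subtype.ext hx)

end Monoid.CoprodI

namespace Monoid.Coprod

universe u

variable {G H : Type u} [Group G] [Group H]

instance : ∀ b : Bool, Group (cond b G H)
  | true => ‹Group G›
  | false => ‹Group H›

def toCoprodI : G ∗ H →* CoprodI (fun b => cond b G H) :=
  lift (CoprodI.of (M := fun b => cond b G H) (i := true))
    (CoprodI.of (M := fun b => cond b G H) (i := false))

def ofCoprodI : CoprodI (fun b => cond b G H) →* G ∗ H :=
  CoprodI.lift fun | true => inl | false => inr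

theorem ofCoprodI_toCoprodI (x : G ∗ H) : ofCoprodI (toCoprodI x) = x := by
  have : ofCoprodI.comp toCoprodI = MonoidHom.id (G ∗ H) := hom_ext rfl rfl
  exact DFunLike.congr_fun this x

theorem isTorsionFree_ker_lift {K : Type*} [Group K] {f : G →* K} {g : H →* K}
    (hf : Injective f) (hg : Injective g) : IsTorsionFree (lift f g).ker := by
  have : lift f g = (CoprodI.lift fun | true => f | false => g).comp toCoprodI := hom_ext rfl rfl
  rw [this]
  exact (CoprodI.isTorsionFree_ker_lift fun | true => hf | false => hg).ker_comp
    (LeftInverse.injective ofCoprodI_toCoprodI)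

end Monoid.Coprod

noncomputable def zmodPowersHom {G : Type*} [Group G] {g : G} {n : ℕ} (hg : orderOf g = n) :
    Multiplicative (ZMod n) →* G :=
  (Subgroup.zpowers g).subtype.comp
    (zmodMulEquivOfGenerator (g := ⟨g, Subgroup.mem_zpowers g⟩)
      (by rintro ⟨_, k, rfl⟩; exact ⟨k, Subtype.ext (by simp)⟩)
      (by rw [Nat.card_zpowers, hg])).toMonoidHom

theorem zmodPowersHom_injective {G : Type*} [Group G] {g : G} {n : ℕ} (hg : orderOf g = n) :
    Injective (zmodPowersHom hg) :=
  Subtype.val_injective.comp (MulEquiv.injective _)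

@[simp]
theorem zmodPowersHom_ofAdd_one {G : Type*} [Group G] {g : G} {n : ℕ} (hg : orderOf g = n) :
    zmodPowersHom hg (.ofAdd 1) = g := by
  simp [zmodPowersHom]

namespace ZMod

def scaleAddHom (n k : ℕ) : ZMod n →+ ZMod (n * k) :=
  lift n ⟨zmultiplesHom _ (k : ZMod (n * k)), by
    rw [zmultiplesHom_apply, natCast_zsmul, nsmul_eq_mul, ← Nat.cast_mul, natCast_self]⟩

theorem scaleAddHom_injective {n k : ℕ} (hk : k ≠ 0) : Injective (scaleAddHom n k) := by
  refine (lift_injective n).mpr fun a ha => ?_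
  rw [zmultiplesHom_apply, zsmul_eq_mul, ← Int.cast_natCast, ← Int.cast_mul,
    intCast_zmod_eq_zero_iff_dvd, Nat.cast_mul] at ha
  rw [intCast_zmod_eq_zero_iff_dvd]
  exact Int.dvd_of_mul_dvd_mul_right (by exact_mod_cast hk) ha

end ZMod

namespace DihedralGroup

def map {n k : ℕ} (f : ZMod n →+ ZMod k) : DihedralGroup n →* DihedralGroup k where
  toFun
    | r i => r (f i)
    | sr i => sr (f i)
  map_one' := by simp only [one_def, map_zero]
  map_mul' := by
    rintro (i | i) (j | j) <;> simp only [r_mul_r, r_mul_sr, sr_mul_r, sr_mul_sr, map_add, map_sub]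

@[simp]
theorem map_r {n k : ℕ} (f : ZMod n →+ ZMod k) (i : ZMod n) : map f (r i) = r (f i) := rfl

@[simp]
theorem map_sr {n k : ℕ} (f : ZMod n →+ ZMod k) (i : ZMod n) : map f (sr i) = sr (f i) := rfl

theorem map_injective {n k : ℕ} {f : ZMod n →+ ZMod k} (hf : Injective f) : Injective (map f) := by
  rintro (i | i) (j | j) h <;> simp only [map_r, map_sr, r.injEq, sr.injEq, reduceCtorEq] at h ⊢
  all_goals exact hf h

theorem closure_sr_zero_sr_one {n : ℕ} :
    Subgroup.closure {sr 0, sr 1} = (⊤ : Subgroup (DihedralGroup n)) := by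
  have h0 : sr 0 ∈ Subgroup.closure {sr (0 : ZMod n), sr 1} := Subgroup.subset_closure (by simp)
  have hr : ∀ i : ZMod n, r i ∈ Subgroup.closure {sr (0 : ZMod n), sr 1} := by
    intro i
    have h1 := mul_mem h0 (Subgroup.subset_closure (by simp) : sr (1 : ZMod n) ∈ _)
    rw [sr_mul_sr, sub_zero] at h1
    simpa [r_one_zpow] using zpow_mem h1 (i.cast : ℤ)
  rw [eq_top_iff]
  rintro (i | i) -
  · exact hr i
  · simpa using mul_mem h0 (hr i)

end DihedralGroup

theorem stmt_14 (m : ℕ) (hm : 1 < m) :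
    ∃ φ : Coprod (Multiplicative (ZMod 2)) (DihedralGroup 2) →* DihedralGroup (2 * m),
      Function.Surjective φ ∧ Monoid.IsTorsionFree φ.ker := by
  refine ⟨Coprod.lift (zmodPowersHom (DihedralGroup.orderOf_sr 1))
      (DihedralGroup.map (ZMod.scaleAddHom 2 m)), ?_,
    Coprod.isTorsionFree_ker_lift (zmodPowersHom_injective _)
      (DihedralGroup.map_injective (ZMod.scaleAddHom_injective (by omega)))⟩
  rw [← MonoidHom.range_eq_top, eq_top_iff, ← DihedralGroup.closure_sr_zero_sr_one,
    Subgroup.closure_le]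
  rintro _ (rfl | rfl)
  · exact ⟨Coprod.inr (.sr 0), by simp⟩
  · exact ⟨Coprod.inl (.ofAdd 1), by simp⟩
end
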